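/- Let η be real, let m ≥ 1 be an integer, and let φ : (0,∞) → ℝ be a smooth function with compact support contained in (0,∞). Then for every t > 0, t^{−2η} · D^m[ s ↦ s^{2(η+m)} (I^m_η φ)(s) ](t) = φ(t), where D acts by (Dg)(t) = (1/(2t)) g′(t) and D^m is its m-fold iterate. In other words, the operator I^{−m}_{η+m} given by (I^{−m}_{η+m} ψ)(t) = t^{−2η} D^m (t^{2(η+m)} ψ(t)) inverts the Erdélyi–Kober integral I^m_η. -/

import Mathlib

open MeasureTheory

/-- The Erdélyi–Kober integral `(I^m_η φ)(t)` of integer order `m ≥ 1` (`η` real). -/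
noncomputable def EKnat (m : ℕ) (η : ℝ) (φ : ℝ → ℝ) (t : ℝ) : ℝ :=
  (2 * t ^ (-2 * ((m : ℝ) + η)) / Real.Gamma m) *
    ∫ r in (0 : ℝ)..t, (t ^ 2 - r ^ 2) ^ (m - 1) * r ^ (2 * η + 1) * φ r

/-- The operator `D = (1/(2t)) d/dt`. -/
noncomputable def Dop (g : ℝ → ℝ) : ℝ → ℝ := fun t => (1 / (2 * t)) * deriv g t

lemma Dop_iterate_congr {f g : ℝ → ℝ} (hfg : Set.EqOn f g (Set.Ioi 0)) (n : ℕ) :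
    Set.EqOn (Dop^[n] f) (Dop^[n] g) (Set.Ioi 0) := by
  induction n with
  | zero => simpa using hfg
  | succ n ih =>
    intro x hx
    rw [Function.iterate_succ_apply', Function.iterate_succ_apply']
    show (1 / (2*x)) * deriv (Dop^[n] f) x = (1 / (2*x)) * deriv (Dop^[n] g) x
    rw [(ih.eventuallyEq_of_mem (isOpen_Ioi.mem_nhds hx)).deriv_eq]

lemma Dop_iterate_const_mul (c : ℝ) (f : ℝ → ℝ) (n : ℕ) (x : ℝ) :
    Dop^[n] (fun s => c * f s) x = c * Dop^[n] f x := by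
  induction n generalizing f x with
  | zero => rfl
  | succ n ih =>
    rw [Function.iterate_succ_apply, Function.iterate_succ_apply]
    have hD : Dop (fun s => c * f s) = fun s => c * Dop f s := by
      funext s
      unfold Dop
      rw [deriv_const_mul_field]
      ring
    rw [hD, ih]

lemma hasDerivAt_primitive {p : ℝ → ℝ} (hp : Continuous p) (x : ℝ) :
    HasDerivAt (fun u => ∫ r in (0:ℝ)..u, p r) (p x) x :=
  intervalIntegral.integral_hasDerivAt_right (hp.intervalIntegrable _ _)
    (hp.stronglyMeasurableAtFilter _ _) hp.continuousAt

lemma G_eq (h : ℝ → ℝ) (hh : Continuous h) (k : ℕ) (u : ℝ) :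
    (∫ r in (0:ℝ)..u, (u^2 - r^2)^k * h r)
      = ∑ j ∈ Finset.range (k+1), (-1:ℝ)^(k-j) * (k.choose j) * u^(2*j)
          * ∫ r in (0:ℝ)..u, r^(2*(k-j)) * h r := by
  calc (∫ r in (0:ℝ)..u, (u^2 - r^2)^k * h r)
      = ∫ r in (0:ℝ)..u, ∑ j ∈ Finset.range (k+1),
          (-1:ℝ)^(k-j) * (k.choose j) * u^(2*j) * (r^(2*(k-j)) * h r) := by
        apply intervalIntegral.integral_congr
        intro r _
        show (u^2 - r^2)^k * h r = _
        rw [sub_eq_add_neg, add_pow, Finset.sum_mul]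
        refine Finset.sum_congr rfl fun j hj => ?_
        rw [neg_pow, pow_mul, pow_mul]
        ring
    _ = ∑ j ∈ Finset.range (k+1), ∫ r in (0:ℝ)..u,
          (-1:ℝ)^(k-j) * (k.choose j) * u^(2*j) * (r^(2*(k-j)) * h r) :=
        intervalIntegral.integral_finset_sum (fun j _ =>
          (continuous_const.mul ((continuous_pow _).mul hh)).intervalIntegrable _ _)
    _ = ∑ j ∈ Finset.range (k+1), (-1:ℝ)^(k-j) * (k.choose j) * u^(2*j)
          * ∫ r in (0:ℝ)..u, r^(2*(k-j)) * h r :=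
        Finset.sum_congr rfl fun j _ => intervalIntegral.integral_const_mul _ _

lemma hasDerivAt_G (h : ℝ → ℝ) (hh : Continuous h) (k : ℕ) (s : ℝ) :
    HasDerivAt (fun u => ∫ r in (0:ℝ)..u, (u^2 - r^2)^(k+1) * h r)
      (2*((k:ℝ)+1)*s * ∫ r in (0:ℝ)..s, (s^2 - r^2)^k * h r) s := by
  have heq : (fun u => ∫ r in (0:ℝ)..u, (u^2 - r^2)^(k+1) * h r)
      = fun u => ∑ j ∈ Finset.range (k+2), (-1:ℝ)^(k+1-j) * ((k+1).choose j)
          * (u^(2*j) * ∫ r in (0:ℝ)..u, r^(2*(k+1-j)) * h r) := by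
    funext u
    rw [G_eq h hh (k+1) u]
    exact Finset.sum_congr rfl fun j _ => by ring
  rw [heq]
  have hterm : ∀ j ∈ Finset.range (k+2), HasDerivAt
      (fun u => (-1:ℝ)^(k+1-j) * ((k+1).choose j)
          * (u^(2*j) * ∫ r in (0:ℝ)..u, r^(2*(k+1-j)) * h r))
      ((-1:ℝ)^(k+1-j) * ((k+1).choose j)
        * (((2*j : ℕ):ℝ) * s^(2*j-1) * (∫ r in (0:ℝ)..s, r^(2*(k+1-j)) * h r)
          + s^(2*j) * (s^(2*(k+1-j)) * h s))) s := by
    intro j _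
    exact ((hasDerivAt_pow (2*j) s).mul
      (hasDerivAt_primitive ((continuous_pow _).mul hh) s)).const_mul _
  have hsum := HasDerivAt.fun_sum hterm
  refine hsum.congr_deriv ?_
  rw [G_eq h hh k s]
  have hsplit : ∑ j ∈ Finset.range (k+2), (-1:ℝ)^(k+1-j) * ((k+1).choose j)
        * (((2*j : ℕ):ℝ) * s^(2*j-1) * (∫ r in (0:ℝ)..s, r^(2*(k+1-j)) * h r)
          + s^(2*j) * (s^(2*(k+1-j)) * h s))
      = (∑ j ∈ Finset.range (k+2), (-1:ℝ)^(k+1-j) * ((k+1).choose j)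
          * (((2*j : ℕ):ℝ) * s^(2*j-1) * ∫ r in (0:ℝ)..s, r^(2*(k+1-j)) * h r))
        + ∑ j ∈ Finset.range (k+2), (-1:ℝ)^(k+1-j) * ((k+1).choose j)
          * (s^(2*j) * (s^(2*(k+1-j)) * h s)) := by
    rw [← Finset.sum_add_distrib]
    exact Finset.sum_congr rfl fun j _ => by ring
  rw [hsplit]
  have hzero : ∑ j ∈ Finset.range (k+2), (-1:ℝ)^(k+1-j) * ((k+1).choose j) = 0 := by
    have h0 := add_pow (1:ℝ) (-1) (k+1)
    simp only [one_pow, one_mul] at h0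
    rw [show ((1:ℝ) + -1) = 0 by ring, zero_pow (Nat.succ_ne_zero k)] at h0
    exact h0.symm
  have hB : ∑ j ∈ Finset.range (k+2), (-1:ℝ)^(k+1-j) * ((k+1).choose j)
      * (s^(2*j) * (s^(2*(k+1-j)) * h s)) = 0 := by
    calc ∑ j ∈ Finset.range (k+2), (-1:ℝ)^(k+1-j) * ((k+1).choose j)
          * (s^(2*j) * (s^(2*(k+1-j)) * h s))
        = ∑ j ∈ Finset.range (k+2), ((-1:ℝ)^(k+1-j) * ((k+1).choose j))
            * (s^(2*(k+1)) * h s) := by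
          refine Finset.sum_congr rfl fun j hj => ?_
          have hj' : j < k + 2 := Finset.mem_range.mp hj
          have he : 2*j + 2*(k+1-j) = 2*(k+1) := by omega
          rw [← mul_assoc (s^(2*j)), ← pow_add, he]
      _ = (∑ j ∈ Finset.range (k+2), (-1:ℝ)^(k+1-j) * ((k+1).choose j))
            * (s^(2*(k+1)) * h s) := (Finset.sum_mul _ _ _).symm
      _ = 0 := by rw [hzero, zero_mul]
  have hA : ∑ j ∈ Finset.range (k+2), (-1:ℝ)^(k+1-j) * ((k+1).choose j)
        * (((2*j : ℕ):ℝ) * s^(2*j-1) * ∫ r in (0:ℝ)..s, r^(2*(k+1-j)) * h r)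
      = 2*((k:ℝ)+1)*s * ∑ i ∈ Finset.range (k+1), (-1:ℝ)^(k-i) * (k.choose i) * s^(2*i)
          * ∫ r in (0:ℝ)..s, r^(2*(k-i)) * h r := by
    rw [Finset.sum_range_succ', Finset.mul_sum]
    have hz : (-1:ℝ)^(k+1-0) * ((k+1).choose 0)
        * (((2*0 : ℕ):ℝ) * s^(2*0-1) * ∫ r in (0:ℝ)..s, r^(2*(k+1-0)) * h r) = 0 := by
      norm_num
    rw [hz, add_zero]
    refine Finset.sum_congr rfl fun i hi => ?_
    have hi' : i < k + 1 := Finset.mem_range.mp hi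
    have e1 : k + 1 - (i+1) = k - i := by omega
    have e2 : 2*(i+1) - 1 = 2*i + 1 := by omega
    rw [e1, e2]
    have hc : (k+1) * k.choose i = (k+1).choose (i+1) * (i+1) := Nat.add_one_mul_choose_eq k i
    have hcR : ((k:ℝ)+1) * (k.choose i) = ((k+1).choose (i+1)) * ((i:ℝ)+1) := by
      exact_mod_cast hc
    set I := ∫ r in (0:ℝ)..s, r^(2*(k-i)) * h r with hI
    push_cast
    rw [pow_succ]
    linear_combination (2:ℝ) * (-1)^(k-i) * s^(2*i) * s * I * hcR.symm
  rw [hA, hB, add_zero, Finset.mul_sum]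

lemma key_lemma (h : ℝ → ℝ) (hh : Continuous h) (k : ℕ) :
    Set.EqOn (Dop^[k] (fun u => ∫ r in (0:ℝ)..u, (u^2 - r^2)^k * h r))
      (fun u => (k.factorial : ℝ) * ∫ r in (0:ℝ)..u, h r) (Set.Ioi 0) := by
  induction k with
  | zero =>
    intro x _
    simp
  | succ k ih =>
    have step : Set.EqOn (Dop (fun u => ∫ r in (0:ℝ)..u, (u^2 - r^2)^(k+1) * h r))
        (fun u => ((k:ℝ)+1) * ∫ r in (0:ℝ)..u, (u^2 - r^2)^k * h r) (Set.Ioi 0) := by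
      intro s hs
      have hs0 : (s:ℝ) ≠ 0 := ne_of_gt hs
      unfold Dop
      rw [(hasDerivAt_G h hh k s).deriv]
      field_simp
    intro x hx
    rw [Function.iterate_succ_apply]
    have h1 := Dop_iterate_congr step k hx
    rw [h1]
    have h2 : Dop^[k] (fun u => ((k:ℝ)+1) * ∫ r in (0:ℝ)..u, (u^2 - r^2)^k * h r) x
        = ((k:ℝ)+1) * Dop^[k] (fun u => ∫ r in (0:ℝ)..u, (u^2 - r^2)^k * h r) x :=
      Dop_iterate_const_mul _ _ k x
    rw [h2, ih hx]
    push_cast [Nat.factorial_succ]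
    ring

/-- the operator `I^{-m}_{η+m} : ψ ↦ t^{-2η} D^m (t^{2(η+m)} ψ)` inverts
the Erdélyi–Kober integral `I^m_η`. -/
theorem erdelyi_kober_integer_inversion
    (η : ℝ) (m : ℕ) (hm : 1 ≤ m)
    (φ : ℝ → ℝ) (hφ : ContDiff ℝ (⊤ : ℕ∞) φ) (hφc : HasCompactSupport φ)
    (hsupp : tsupport φ ⊆ Set.Ioi (0 : ℝ))
    (t : ℝ) (ht : 0 < t) :
    t ^ (-2 * η) * Dop^[m] (fun s => s ^ (2 * (η + (m : ℝ))) * EKnat m η φ s) t = φ t := by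
  obtain ⟨n, rfl⟩ : ∃ n, m = n + 1 := ⟨m - 1, by omega⟩
  set h : ℝ → ℝ := fun r => r ^ (2*η + 1) * φ r with hhdef
  have hh : Continuous h := by
    rw [continuous_iff_continuousAt]
    intro x
    by_cases hx : x ∈ tsupport φ
    · have hx0 : x ≠ 0 := by
        have := hsupp hx
        exact ne_of_gt this
      exact (Real.continuousAt_rpow_const x _ (Or.inl hx0)).mul hφ.continuous.continuousAt
    · have hev : h =ᶠ[nhds x] (fun _ => (0:ℝ)) := by
        filter_upwards [(isClosed_tsupport φ).isOpen_compl.mem_nhds hx] with y hy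
        simp [hhdef, image_eq_zero_of_notMem_tsupport hy]
      exact hev.continuousAt
  -- rewrite the function inside Dop^[m] on Ioi 0
  have hΓ : Real.Gamma ((n+1 : ℕ) : ℝ) = (n.factorial : ℝ) := by
    push_cast
    exact_mod_cast Real.Gamma_nat_eq_factorial n
  have heqon : Set.EqOn (fun s => s ^ (2 * (η + ((n+1 : ℕ) : ℝ))) * EKnat (n+1) η φ s)
      (fun s => (2 / (n.factorial : ℝ)) *
        ∫ r in (0:ℝ)..s, (s^2 - r^2)^n * h r) (Set.Ioi 0) := by
    intro s hs
    have hs0 : (0:ℝ) < s := hs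
    unfold EKnat
    have hint : (∫ r in (0:ℝ)..s, (s ^ 2 - r ^ 2) ^ ((n+1) - 1) * r ^ (2 * η + 1) * φ r)
        = ∫ r in (0:ℝ)..s, (s^2 - r^2)^n * h r := by
      refine intervalIntegral.integral_congr fun r _ => ?_
      simp only [Nat.add_sub_cancel, hhdef]
      ring
    simp only [hint, hΓ]
    have hone : s ^ (2 * (η + ((n+1 : ℕ) : ℝ))) * s ^ (-2 * (((n+1 : ℕ) : ℝ) + η)) = 1 := by
      rw [← Real.rpow_add hs0,
        show (2 * (η + ((n+1 : ℕ) : ℝ)) + -2 * (((n+1 : ℕ) : ℝ) + η)) = 0 by push_cast; ring,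
        Real.rpow_zero]
    have hsc : s ^ (2 * (η + ((n+1 : ℕ) : ℝ)))
        * (2 * s ^ (-2 * (((n+1 : ℕ) : ℝ) + η)) / (n.factorial : ℝ))
        = 2 / (n.factorial : ℝ) := by
      rw [show s ^ (2 * (η + ((n+1 : ℕ) : ℝ)))
          * (2 * s ^ (-2 * (((n+1 : ℕ) : ℝ) + η)) / (n.factorial : ℝ))
          = (s ^ (2 * (η + ((n+1 : ℕ) : ℝ))) * s ^ (-2 * (((n+1 : ℕ) : ℝ) + η)))
            * (2 / (n.factorial : ℝ)) by ring, hone, one_mul]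
    rw [← mul_assoc, hsc]
  have hmain := Dop_iterate_congr heqon (n+1) (Set.mem_Ioi.mpr ht)
  rw [hmain]
  have hconst : Dop^[n+1] (fun s => (2 / (n.factorial : ℝ)) *
        ∫ r in (0:ℝ)..s, (s^2 - r^2)^n * h r) t
      = (2 / (n.factorial : ℝ)) *
        Dop^[n+1] (fun s => ∫ r in (0:ℝ)..s, (s^2 - r^2)^n * h r) t :=
    Dop_iterate_const_mul _ _ _ _
  rw [hconst]
  have hfin : Dop^[n+1] (fun s => ∫ r in (0:ℝ)..s, (s^2 - r^2)^n * h r) t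
      = (1 / (2*t)) * ((n.factorial : ℝ) * h t) := by
    rw [Function.iterate_succ_apply']
    show (1 / (2*t)) * deriv (Dop^[n] fun s => ∫ r in (0:ℝ)..s, (s^2 - r^2)^n * h r) t = _
    have hev : (Dop^[n] fun s => ∫ r in (0:ℝ)..s, (s^2 - r^2)^n * h r)
        =ᶠ[nhds t] (fun u => (n.factorial : ℝ) * ∫ r in (0:ℝ)..u, h r) :=
      (key_lemma h hh n).eventuallyEq_of_mem (isOpen_Ioi.mem_nhds ht)
    rw [hev.deriv_eq]
    congr 1
    exact (((hasDerivAt_primitive hh t).const_mul ((n.factorial : ℝ)))).deriv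
  rw [hfin]
  have ht0 : t ≠ 0 := ne_of_gt ht
  have hfac : (n.factorial : ℝ) ≠ 0 := Nat.cast_ne_zero.mpr n.factorial_ne_zero
  have hpow : t ^ (-2*η) * t ^ (2*η+1) = t := by
    rw [← Real.rpow_add ht, show (-2*η + (2*η+1)) = 1 by ring, Real.rpow_one]
  have hstep : t ^ (-2*η) * (2 / (n.factorial : ℝ) * (1 / (2*t) * ((n.factorial : ℝ) * h t)))
      = (t ^ (-2*η) * t ^ (2*η+1)) * φ t / t := by
    simp only [hhdef]
    field_simp
  rw [hstep, hpow]
  field_simp
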